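/- Let (L,[·,·],α) be a Hom-Lie superalgebra and f: L → L an even linear map with fα = αf. Define x⋆'y = [x,f(y)]. Then (L, [·,·], ⋆', α) is a super Hom-Gel'fand-Dorfman bialgebra if and only if the following three conditions hold for all homogeneous x,y,z ∈ L: (i) [[x,f(y)] + [f(x),y], f(α(z))] − [α(x), f([y,f(z)])] + (−1)^{|x||y|}[α(y), f([x,f(z)])] = 0; (ii) [f(y),f(z)] ∈ Z(α(L)); (iii) [y,f(z)] + [f(y),z] − f([y,z]) ∈ Z(α(L)). -/

import Mathlib

noncomputable section

/-- The sign `(-1)^{|x||y|}` attached to parities `i, j` in `ℤ₂`. -/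
def sg (i j : ZMod 2) : ℂ := (-1 : ℂ) ^ (i.val * j.val)

variable {A : Type*} [AddCommGroup A] [Module ℂ A]

/-- `gr` makes `A` into a superspace: `A = A₀ ⊕ A₁`. -/
def IsSupergrading (gr : ZMod 2 → Submodule ℂ A) : Prop :=
  (∀ x : A, ∃ x0 ∈ gr 0, ∃ x1 ∈ gr 1, x = x0 + x1) ∧ (gr 0 ⊓ gr 1 = ⊥)

/-- An even linear map: it preserves the grading. -/
def EvenLin (gr : ZMod 2 → Submodule ℂ A) (α : A →ₗ[ℂ] A) : Prop :=
  ∀ i : ZMod 2, ∀ x ∈ gr i, α x ∈ gr i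

/-- An even bilinear map: it adds parities. -/
def EvenBilin (gr : ZMod 2 → Submodule ℂ A) (m : A →ₗ[ℂ] A →ₗ[ℂ] A) : Prop :=
  ∀ i j : ZMod 2, ∀ x ∈ gr i, ∀ y ∈ gr j, m x y ∈ gr (i + j)

/-- A Hom-Lie superalgebra structure on the superspace `(A, gr)`. -/
def HomLieSuper (gr : ZMod 2 → Submodule ℂ A) (br : A →ₗ[ℂ] A →ₗ[ℂ] A)
    (α : A →ₗ[ℂ] A) : Prop :=
  EvenLin gr α ∧ EvenBilin gr br ∧
  (∀ (i j : ZMod 2), ∀ x ∈ gr i, ∀ y ∈ gr j, br x y = -(sg i j • br y x)) ∧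
  (∀ (i j k : ZMod 2), ∀ x ∈ gr i, ∀ y ∈ gr j, ∀ z ∈ gr k,
    sg i k • br (br x y) (α z) + sg i j • br (br y z) (α x)
      + sg j k • br (br z x) (α y) = 0)

/-- A Hom-Novikov superalgebra structure on the superspace `(A, gr)`. -/
def HomNovikovSuper (gr : ZMod 2 → Submodule ℂ A) (c : A →ₗ[ℂ] A →ₗ[ℂ] A)
    (α : A →ₗ[ℂ] A) : Prop :=
  EvenLin gr α ∧ EvenBilin gr c ∧
  (∀ (i j k : ZMod 2), ∀ x ∈ gr i, ∀ y ∈ gr j, ∀ z ∈ gr k,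
    c (c x y) (α z) - c (α x) (c y z) = sg i j • (c (c y x) (α z) - c (α y) (c x z))) ∧
  (∀ (i j k : ZMod 2), ∀ x ∈ gr i, ∀ y ∈ gr j, ∀ z ∈ gr k,
    c (c x y) (α z) = sg j k • c (c x z) (α y))

/-- A super Hom-Gel'fand-Dorfman bialgebra structure on the superspace `(A, gr)`. -/
def SuperHomGD (gr : ZMod 2 → Submodule ℂ A) (br c : A →ₗ[ℂ] A →ₗ[ℂ] A)
    (α : A →ₗ[ℂ] A) : Prop :=
  HomLieSuper gr br α ∧ HomNovikovSuper gr c α ∧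
  (∀ (i j k : ZMod 2), ∀ x ∈ gr i, ∀ y ∈ gr j, ∀ z ∈ gr k,
    br (c x y) (α z) - sg j k • br (c x z) (α y) + c (br x y) (α z)
      - sg j k • c (br x z) (α y) - c (α x) (br y z) = 0)

/-- A Lie superalgebra structure on the superspace `(A, gr)`. -/
def LieSuper (gr : ZMod 2 → Submodule ℂ A) (br : A →ₗ[ℂ] A →ₗ[ℂ] A) : Prop :=
  EvenBilin gr br ∧
  (∀ (i j : ZMod 2), ∀ x ∈ gr i, ∀ y ∈ gr j, br x y = -(sg i j • br y x)) ∧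
  (∀ (i j k : ZMod 2), ∀ x ∈ gr i, ∀ y ∈ gr j, ∀ z ∈ gr k,
    sg i k • br (br x y) z + sg i j • br (br y z) x + sg j k • br (br z x) y = 0)

/-- A Novikov superalgebra structure on the superspace `(A, gr)`. -/
def NovikovSuper (gr : ZMod 2 → Submodule ℂ A) (c : A →ₗ[ℂ] A →ₗ[ℂ] A) : Prop :=
  EvenBilin gr c ∧
  (∀ (i j k : ZMod 2), ∀ x ∈ gr i, ∀ y ∈ gr j, ∀ z ∈ gr k,
    c (c x y) z - c x (c y z) = sg i j • (c (c y x) z - c y (c x z))) ∧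
  (∀ (i j k : ZMod 2), ∀ x ∈ gr i, ∀ y ∈ gr j, ∀ z ∈ gr k,
    c (c x y) z = sg j k • c (c x z) y)

/-- A super Gel'fand-Dorfman bialgebra structure on the superspace `(A, gr)`. -/
def SuperGD (gr : ZMod 2 → Submodule ℂ A) (br c : A →ₗ[ℂ] A →ₗ[ℂ] A) : Prop :=
  LieSuper gr br ∧ NovikovSuper gr c ∧
  (∀ (i j k : ZMod 2), ∀ x ∈ gr i, ∀ y ∈ gr j, ∀ z ∈ gr k,
    br (c x y) z - sg j k • br (c x z) y + c (br x y) z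
      - sg j k • c (br x z) y - c x (br y z) = 0)

/-!
Write `x ⋆' y = [x, f y]`. At homogeneous `x, y, z`, each remaining axiom of a super
Hom-Gel'fand-Dorfman bialgebra is, up to a sign, one of the conditions (i)–(iii) tested against
`α x`: super skew-symmetry turns the left-symmetry defect of `⋆'` into (i), and the Hom-Jacobi
identity, applied to `(x, f y, f z)` resp. to `(x, f y, z)` and `(x, y, f z)`, turns the
right-commutativity defect into `[[f y, f z], α x]` and the compatibility defect into
`[[y, f z] + [f y, z] - f [y, z], α x]`. As every element is a sum of homogeneous ones, vanishing
against `α x` for homogeneous `x` is membership in `Z(α(L))`.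
-/

theorem sg_comm (i j : ZMod 2) : sg i j = sg j i := by
  rw [sg, sg, mul_comm]

theorem sg_mul_self (i j : ZMod 2) : sg i j * sg i j = 1 := by
  rw [sg, ← pow_add, ← two_mul, pow_mul]
  norm_num

theorem sg_add_right (i j k : ZMod 2) : sg i (j + k) = sg i j * sg i k := by
  rw [sg, sg, sg, ← pow_add, ← mul_add, ZMod.val_add, neg_one_pow_eq_pow_mod_two,
    neg_one_pow_eq_pow_mod_two (_ * (_ + _)), Nat.mul_mod, Nat.mod_mod, ← Nat.mul_mod]

theorem sg_ne_zero (i j : ZMod 2) : sg i j ≠ 0 :=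
  pow_ne_zero _ (neg_ne_zero.2 one_ne_zero)

section

variable {L : Type*} [AddCommGroup L] [Module ℂ L] {gr : ZMod 2 → Submodule ℂ L}

theorem IsSupergrading.eq_zero_of_forall_homogeneous {M : Type*} [AddCommGroup M] [Module ℂ M]
    (hgr : IsSupergrading gr) {g : L →ₗ[ℂ] M} (hg : ∀ i, ∀ w ∈ gr i, g w = 0) (w : L) :
    g w = 0 := by
  obtain ⟨w₀, hw₀, w₁, hw₁, rfl⟩ := hgr.1 w
  rw [map_add, hg 0 w₀ hw₀, hg 1 w₁ hw₁, add_zero]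

theorem EvenBilin.compl₂ {br : L →ₗ[ℂ] L →ₗ[ℂ] L} {f : L →ₗ[ℂ] L} (hbr : EvenBilin gr br)
    (hf : EvenLin gr f) : EvenBilin gr (br.compl₂ f) :=
  fun i j x hx y hy => hbr i j x hx (f y) (hf j y hy)

variable {br : L →ₗ[ℂ] L →ₗ[ℂ] L} {α : L →ₗ[ℂ] L}

theorem HomLieSuper.br_br_apply_swap (hL : HomLieSuper gr br α) {i j : ZMod 2} {a b : L}
    (ha : a ∈ gr i) (hb : b ∈ gr j) (w : L) :
    br (br a b) w = -(sg i j • br (br b a) w) := by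
  rw [hL.2.2.1 i j a ha b hb, map_neg, map_smul, LinearMap.neg_apply, LinearMap.smul_apply]

theorem HomLieSuper.jacobi_swap (hL : HomLieSuper gr br α) {i j k : ZMod 2} {a b c : L}
    (ha : a ∈ gr i) (hb : b ∈ gr j) (hc : c ∈ gr k) :
    br (br a b) (α c) - sg j k • br (br a c) (α b) = -(sg i k * sg i j) • br (br b c) (α a) := by
  have hJ := hL.2.2.2 i j k a ha b hb c hc
  rw [hL.br_br_apply_swap hc ha, sg_comm k i] at hJ
  linear_combination (norm := match_scalars) sg i k • hJ
  · linear_combination -sg_mul_self i k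
  · linear_combination sg j k * sg_mul_self i k
  · ring

theorem neg_sg_mul_sg_smul_eq_zero_iff {M : Type*} [AddCommGroup M] [Module ℂ M]
    (i j k l : ZMod 2) {v : M} : -(sg i j * sg k l) • v = 0 ↔ v = 0 :=
  smul_eq_zero_iff_right (neg_ne_zero.2 (mul_ne_zero (sg_ne_zero i j) (sg_ne_zero k l)))

variable {f : L →ₗ[ℂ] L}

theorem HomLieSuper.novikov_left_compl₂_iff (hL : HomLieSuper gr br α) (hf : EvenLin gr f)
    {i j : ZMod 2} {x y : L} (hx : x ∈ gr i) (hy : y ∈ gr j) (z : L) :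
    br.compl₂ f (br.compl₂ f x y) (α z) - br.compl₂ f (α x) (br.compl₂ f y z)
        = sg i j • (br.compl₂ f (br.compl₂ f y x) (α z) - br.compl₂ f (α y) (br.compl₂ f x z)) ↔
      br (br x (f y) + br (f x) y) (f (α z)) - br (α x) (f (br y (f z)))
        + sg i j • br (α y) (f (br x (f z))) = 0 := by
  simp only [LinearMap.compl₂_apply, map_add, LinearMap.add_apply,
    hL.br_br_apply_swap (hf i x hx) hy]
  constructor <;> intro h <;> linear_combination (norm := module) h

theorem HomLieSuper.novikov_right_compl₂_iff (hL : HomLieSuper gr br α) (hf : EvenLin gr f)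
    (hfα : ∀ x : L, f (α x) = α (f x)) {i j k : ZMod 2} {x y z : L}
    (hx : x ∈ gr i) (hy : y ∈ gr j) (hz : z ∈ gr k) :
    br.compl₂ f (br.compl₂ f x y) (α z) = sg j k • br.compl₂ f (br.compl₂ f x z) (α y) ↔
      br (br (f y) (f z)) (α x) = 0 := by
  simp only [LinearMap.compl₂_apply, hfα]
  rw [← sub_eq_zero, hL.jacobi_swap hx (hf j y hy) (hf k z hz), neg_sg_mul_sg_smul_eq_zero_iff]

theorem HomLieSuper.compatibility_compl₂_iff (hL : HomLieSuper gr br α) (hf : EvenLin gr f)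
    (hfα : ∀ x : L, f (α x) = α (f x)) {i j k : ZMod 2} {x y z : L}
    (hx : x ∈ gr i) (hy : y ∈ gr j) (hz : z ∈ gr k) :
    br (br.compl₂ f x y) (α z) - sg j k • br (br.compl₂ f x z) (α y)
        + br.compl₂ f (br x y) (α z) - sg j k • br.compl₂ f (br x z) (α y)
        - br.compl₂ f (α x) (br y z) = 0 ↔
      br (br y (f z) + br (f y) z - f (br y z)) (α x) = 0 := by
  obtain ⟨hα, hbr, hskew, -⟩ := id hL
  have hJ₁ := hL.jacobi_swap hx (hf j y hy) hz
  have hJ₂ := hL.jacobi_swap hx hy (hf k z hz)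
  have hS := hskew i (j + k) (α x) (hα i x hx) (f (br y z)) (hf _ _ (hbr j k y hy z hz))
  rw [sg_add_right] at hS
  simp only [LinearMap.compl₂_apply, hfα]
  conv_rhs => rw [← neg_sg_mul_sg_smul_eq_zero_iff i k i j]
  simp only [map_add, map_sub, LinearMap.add_apply, LinearMap.sub_apply]
  constructor
  · intro h
    linear_combination (norm := module) h - hJ₁ - hJ₂ + hS
  · intro h
    linear_combination (norm := module) h + hJ₁ + hJ₂ - hS

end

/-- For a Hom-Lie superalgebra `(L, [·,·], α)` and an even linear map `f`
commuting with `α`, with `x⋆'y = [x, f(y)]`, the tuple `(L, [·,·], ⋆', α)` is a super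
Hom-Gel'fand-Dorfman bialgebra iff for all homogeneous `x,y,z`:
(i) `[[x,f(y)]+[f(x),y], f(α(z))] − [α(x), f([y,f(z)])] + (−1)^{|x||y|}[α(y), f([x,f(z)])] = 0`,
(ii) `[f(y),f(z)] ∈ Z(α(L))`, and (iii) `[y,f(z)] + [f(y),z] − f([y,z]) ∈ Z(α(L))`. -/
theorem superHomGD_star'_iff
    {L : Type*} [AddCommGroup L] [Module ℂ L]
    (gr : ZMod 2 → Submodule ℂ L) (hgr : IsSupergrading gr)
    (br : L →ₗ[ℂ] L →ₗ[ℂ] L) (α : L →ₗ[ℂ] L)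
    (hL : HomLieSuper gr br α)
    (f : L →ₗ[ℂ] L) (hfeven : EvenLin gr f)
    (hfα : ∀ x : L, f (α x) = α (f x)) :
    SuperHomGD gr br (br.compl₂ f) α ↔
      ((∀ (i j k : ZMod 2), ∀ x ∈ gr i, ∀ y ∈ gr j, ∀ z ∈ gr k,
          br (br x (f y) + br (f x) y) (f (α z)) - br (α x) (f (br y (f z)))
            + sg i j • br (α y) (f (br x (f z))) = 0) ∧
       (∀ (j k : ZMod 2), ∀ y ∈ gr j, ∀ z ∈ gr k, ∀ w : L,
          br (br (f y) (f z)) (α w) = 0) ∧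
       (∀ (j k : ZMod 2), ∀ y ∈ gr j, ∀ z ∈ gr k, ∀ w : L,
          br (br y (f z) + br (f y) z - f (br y z)) (α w) = 0)) := by
  constructor
  · rintro ⟨-, ⟨-, -, hN₁, hN₂⟩, hC⟩
    refine ⟨fun i j k x hx y hy z hz => ?_, fun j k y hy z hz w => ?_,
      fun j k y hy z hz w => ?_⟩
    · exact (hL.novikov_left_compl₂_iff hfeven hx hy z).1 (hN₁ i j k x hx y hy z hz)
    · refine hgr.eq_zero_of_forall_homogeneous (g := (br _).comp α) (fun i x hx => ?_) w
      exact (hL.novikov_right_compl₂_iff hfeven hfα hx hy hz).1 (hN₂ i j k x hx y hy z hz)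
    · refine hgr.eq_zero_of_forall_homogeneous (g := (br _).comp α) (fun i x hx => ?_) w
      exact (hL.compatibility_compl₂_iff hfeven hfα hx hy hz).1 (hC i j k x hx y hy z hz)
  · rintro ⟨hi, hii, hiii⟩
    refine ⟨hL, ⟨hL.1, hL.2.1.compl₂ hfeven, fun i j k x hx y hy z hz => ?_,
      fun i j k x hx y hy z hz => ?_⟩, fun i j k x hx y hy z hz => ?_⟩
    · exact (hL.novikov_left_compl₂_iff hfeven hx hy z).2 (hi i j k x hx y hy z hz)
    · exact (hL.novikov_right_compl₂_iff hfeven hfα hx hy hz).2 (hii j k y hy z hz x)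
    · exact (hL.compatibility_compl₂_iff hfeven hfα hx hy hz).2 (hiii j k y hy z hz x)

end
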